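/- arXiv:1302.0333 — 5 statements merged into one kernel-verified Lean document; each statement's English description precedes it below -/
import Mathlib

section
/- For n ≥ 5, every element of the alternating group A_n is a product of three even permutations each of order dividing 2. -/
/-!
Every permutation `σ` is inverted by an involution `t` supported in `σ.support`: on a cycle, `t`
is inversion in `⟨σ⟩` transported to the support along `g ↦ g x₀`, and involutions for disjoint
cycles multiply. Hence `σ = (σ * t) * t` is a product of two involutions. If `σ` is even and fixes
two points `x ≠ y`, the two involutions are either both even or both odd, and in the odd case
multiplying each by `swap x y` repairs the parity. Finally, for `n ≥ 5`, any even `p` that moves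
all but at most one point moves some `x` and some `y ∉ {x, p x, p⁻¹ x}`, and then the even
involution `swap x (p x) * swap y (p y)` turns `p` into a permutation fixing `x` and `y`.
-/

theorem Commute.mul_self_eq_one {G : Type*} [Monoid G] {s t : G} (h : Commute s t)
    (hs : s * s = 1) (ht : t * t = 1) : s * t * (s * t) = 1 := by
  rw [h.symm.mul_mul_mul_comm, hs, ht, one_mul]

theorem mul_mul_eq_inv_mul_of_commute {G : Type*} [Group G] {s t σ τ : G}
    (hs : s * σ = σ⁻¹ * s) (ht : t * τ = τ⁻¹ * t)
    (hsτ : Commute s τ) (htσ : Commute t σ) (hστ : Commute σ τ) :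
    s * t * (σ * τ) = (σ * τ)⁻¹ * (s * t) := by
  calc s * t * (σ * τ) = s * σ * (t * τ) := by rw [htσ.mul_mul_mul_comm]
    _ = σ⁻¹ * s * (τ⁻¹ * t) := by rw [hs, ht]
    _ = σ⁻¹ * τ⁻¹ * (s * t) := by rw [hsτ.inv_right.mul_mul_mul_comm]
    _ = (σ * τ)⁻¹ * (s * t) := by rw [hστ.inv_inv.eq, mul_inv_rev]

namespace Equiv.Perm

variable {α : Type*} [DecidableEq α] [Fintype α]

theorem IsCycle.exists_involution_mul_eq_inv_mul {σ : Perm α} (hσ : σ.IsCycle) :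
    ∃ t : Perm α, t * t = 1 ∧ t * σ = σ⁻¹ * t ∧ t.support ⊆ σ.support := by
  set e := hσ.zpowersEquivSupport
  set t : Perm α := ofSubtype (e.permCongr (Equiv.inv _))
  have ht : ∀ g, t (e g) = e g⁻¹ := fun g => by
    simp [t, ofSubtype_apply_coe]
  have hσe : ∀ g, σ (e g) = e (⟨σ, Subgroup.mem_zpowers σ⟩ * g) := fun _ => rfl
  have hσe' : ∀ g, σ⁻¹ (e g) = e (⟨σ, Subgroup.mem_zpowers σ⟩⁻¹ * g) := fun _ => rfl
  have hfix : ∀ y ∉ σ.support, t y = y := fun y hy => ofSubtype_apply_of_not_mem _ hy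
  refine ⟨t, ?_, ?_, ?_⟩
  · ext y
    by_cases hy : y ∈ σ.support
    · lift y to σ.support using hy
      obtain ⟨g, rfl⟩ := e.surjective y
      simp [ht]
    · simp [hfix y hy]
  · ext y
    by_cases hy : y ∈ σ.support
    · lift y to σ.support using hy
      obtain ⟨g, rfl⟩ := e.surjective y
      simp only [Perm.mul_apply, hσe, hσe', ht, mul_inv_rev]
      exact congrArg (fun h => (e h : α)) (Std.Commutative.comm _ _)
    · have hy' : σ y = y := notMem_support.mp hy
      rw [Perm.mul_apply, Perm.mul_apply, hy', hfix y hy, eq_comm, inv_eq_iff_eq, hy']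
  · intro y hy
    rw [support_ofSubtype, Finset.mem_map] at hy
    obtain ⟨z, -, rfl⟩ := hy
    exact z.2

theorem exists_involution_mul_eq_inv_mul (σ : Perm α) :
    ∃ t : Perm α, t * t = 1 ∧ t * σ = σ⁻¹ * t ∧ t.support ⊆ σ.support := by
  induction σ using cycle_induction_on with
  | base_one => exact ⟨1, by simp, by simp, by simp⟩
  | base_cycles σ hσ => exact hσ.exists_involution_mul_eq_inv_mul
  | induction_disjoint σ τ hστ _ ihσ ihτ =>
    obtain ⟨s, hs, hsσ, hs_supp⟩ := ihσ
    obtain ⟨t, ht, htτ, ht_supp⟩ := ihτ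
    have hdisj : ∀ {a b : Perm α}, a.support ⊆ σ.support → b.support ⊆ τ.support →
        Commute a b := fun ha hb =>
      (disjoint_iff_disjoint_support.mpr
        ((disjoint_iff_disjoint_support.mp hστ).mono ha hb)).commute
    refine ⟨s * t, (hdisj hs_supp ht_supp).mul_self_eq_one hs ht,
      mul_mul_eq_inv_mul_of_commute hsσ htτ (hdisj hs_supp subset_rfl)
        (hdisj subset_rfl ht_supp).symm hστ.commute, ?_⟩
    rw [hστ.support_mul]
    exact (support_mul_le s t).trans (sup_le_sup hs_supp ht_supp)

theorem exists_involutions_mul_eq (σ : Perm α) :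
    ∃ s t : Perm α, s * s = 1 ∧ t * t = 1 ∧ σ = s * t ∧
      s.support ⊆ σ.support ∧ t.support ⊆ σ.support := by
  obtain ⟨t, ht, htσ, ht_supp⟩ := exists_involution_mul_eq_inv_mul σ
  refine ⟨σ * t, t, ?_, ht, by rw [mul_assoc, ht, mul_one], ?_, ht_supp⟩
  · rw [mul_assoc, ← mul_assoc t, htσ, ← mul_assoc, mul_inv_cancel_left, ht]
  · exact (support_mul_le σ t).trans (sup_le le_rfl ht_supp)

theorem exists_even_involutions_mul_eq {p : Perm α} (hp : sign p = 1) {x y : α} (hxy : x ≠ y)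
    (hx : p x = x) (hy : p y = y) :
    ∃ b c : Perm α, b * b = 1 ∧ c * c = 1 ∧ sign b = 1 ∧ sign c = 1 ∧ p = b * c := by
  obtain ⟨s, t, hs, ht, rfl, hs_supp, ht_supp⟩ := exists_involutions_mul_eq p
  rw [sign_mul] at hp
  rcases Int.units_eq_one_or (sign s) with hs_sign | hs_sign
  · rw [hs_sign, one_mul] at hp
    exact ⟨s, t, hs, ht, hs_sign, hp, rfl⟩
  · have ht_sign : sign t = -1 := by rw [hs_sign] at hp; simpa using congrArg (- ·) hp
    have hcomm : ∀ {u : Perm α}, u.support ⊆ (s * t).support → Commute u (swap x y) := by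
      intro u hu
      refine (disjoint_iff_disjoint_support.mpr ?_).commute
      rw [support_swap hxy, Finset.disjoint_insert_right, Finset.disjoint_singleton_right]
      exact ⟨fun h => notMem_support.mpr hx (hu h), fun h => notMem_support.mpr hy (hu h)⟩
    refine ⟨s * swap x y, swap x y * t, (hcomm hs_supp).mul_self_eq_one hs (swap_mul_self x y),
      (hcomm ht_supp).symm.mul_self_eq_one (swap_mul_self x y) ht, ?_, ?_, ?_⟩
    · rw [sign_mul, hs_sign, sign_swap hxy]; rfl
    · rw [sign_mul, ht_sign, sign_swap hxy]; rfl
    · rw [mul_assoc, ← mul_assoc (swap x y), swap_mul_self, one_mul]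

theorem exists_even_involution_mul_fixes_two (hα : 5 ≤ Fintype.card α) (p : Perm α) :
    ∃ a : Perm α, a * a = 1 ∧ sign a = 1 ∧
      ∃ x y, x ≠ y ∧ (a * p) x = x ∧ (a * p) y = y := by
  by_cases hfix : 1 < p.supportᶜ.card
  · obtain ⟨x, hx, y, hy, hxy⟩ := Finset.one_lt_card.mp hfix
    rw [Finset.mem_compl, notMem_support] at hx hy
    exact ⟨1, one_mul 1, sign_one, x, y, hxy, hx, hy⟩
  rw [Finset.card_compl] at hfix
  obtain ⟨x, hx⟩ : p.support.Nonempty := Finset.card_pos.mp (by omega)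
  obtain ⟨y, hy, hy3⟩ := Finset.exists_mem_notMem_of_card_lt_card (t := p.support)
    (Finset.card_le_three (a := x) (b := p x) (c := p⁻¹ x) |>.trans_lt (by omega))
  simp only [Finset.mem_insert, Finset.mem_singleton, not_or] at hy3
  obtain ⟨hyx, hypx, hypix⟩ := hy3
  rw [mem_support] at hx hy
  have hpyx : p y ≠ x := fun h => hypix (eq_inv_iff_eq.mpr h)
  have hpxy : p x ≠ p y := fun h => hyx (p.injective h).symm
  have hcomm : Commute (swap x (p x)) (swap y (p y)) := by
    refine (disjoint_iff_disjoint_support.mpr ?_).commute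
    rw [support_swap hx.symm, support_swap hy.symm]
    simp only [Finset.disjoint_insert_right, Finset.disjoint_singleton_right, Finset.mem_insert,
      Finset.mem_singleton, not_or]
    exact ⟨⟨hyx, hypx⟩, hpyx, hpxy.symm⟩
  refine ⟨swap x (p x) * swap y (p y), hcomm.mul_self_eq_one (swap_mul_self _ _)
    (swap_mul_self _ _), ?_, x, y, Ne.symm hyx, ?_, ?_⟩
  · rw [sign_mul, sign_swap hx.symm, sign_swap hy.symm]; rfl
  · simp only [Perm.mul_apply, swap_apply_of_ne_of_ne (Ne.symm hypx) hpxy, swap_apply_right]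
  · simp only [Perm.mul_apply, swap_apply_right, swap_apply_of_ne_of_ne hyx hypx]

end Equiv.Perm

open Equiv.Perm in
/-- For `n ≥ 5`, every element of the alternating group `A_n` is a product
of three even permutations, each of order dividing 2. -/
theorem stmt_1 (n : ℕ) (hn : 5 ≤ n) (g : alternatingGroup (Fin n)) :
    ∃ a b c : alternatingGroup (Fin n),
      a * a = 1 ∧ b * b = 1 ∧ c * c = 1 ∧ g = a * b * c := by
  obtain ⟨p, hp⟩ := g
  replace hp : sign p = 1 := mem_alternatingGroup.mp hp
  obtain ⟨a, ha, ha_sign, x, y, hxy, hx, hy⟩ :=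
    exists_even_involution_mul_fixes_two (by simpa using hn) p
  obtain ⟨b, c, hb, hc, hb_sign, hc_sign, hbc⟩ :=
    exists_even_involutions_mul_eq (by rw [Equiv.Perm.sign_mul, ha_sign, hp, one_mul]) hxy hx hy
  refine ⟨⟨a, ha_sign⟩, ⟨b, hb_sign⟩, ⟨c, hc_sign⟩, Subtype.ext ha, Subtype.ext hb,
    Subtype.ext hc, Subtype.ext ?_⟩
  show p = a * b * c
  rw [mul_assoc, ← hbc, ← mul_assoc, ha, one_mul]
end

section
/- Let V be a finite-dimensional vector space over a field F, let g, h be endomorphisms of V and λ, μ ∈ F. Then rank(g∘h − λμ·id) ≤ rank(g − λ·id) + rank(h − μ·id). Consequently, if g_1, ..., g_m are endomorphisms with rank(g_i − λ_i·id) ≤ 1 for scalars λ_i, then for μ = λ_1⋯λ_m, the endomorphism g_1∘⋯∘g_m − μ·id has rank at most m; in particular if m < dim V then g_1∘⋯∘g_m has eigenvalue μ. -/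
open Module

lemma aux_rank_mul_sub {K V : Type*} [Field K] [AddCommGroup V] [Module K V]
    (g h : Module.End K V) (l m : K) :
    LinearMap.rank (g * h - (l * m) • (1 : Module.End K V)) ≤
      LinearMap.rank (g - l • (1 : Module.End K V)) +
        LinearMap.rank (h - m • (1 : Module.End K V)) := by
  have key : g * h - (l * m) • (1 : Module.End K V)
      = (m • (1 : Module.End K V)) * (g - l • 1) + g * (h - m • 1) := by
    simp only [mul_sub, sub_mul, mul_smul_comm, smul_mul_assoc, mul_one, one_mul]
    module
  rw [key, Module.End.mul_eq_comp, Module.End.mul_eq_comp]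
  exact le_trans (LinearMap.rank_add_le _ _)
    (add_le_add (LinearMap.rank_comp_le_right _ (m • 1)) (LinearMap.rank_comp_le_right _ g))

/-- `rank (g∘h - λμ·id) ≤ rank (g - λ·id) + rank (h - μ·id)`; consequently a
product of `m` endomorphisms `g_i` with `rank (g_i - λ_i·id) ≤ 1` differs from
`(∏ λ_i)·id` by an endomorphism of rank at most `m`, and if `m < dim V` then
the product has eigenvalue `∏ λ_i`. -/
theorem stmt_5 {K V : Type*} [Field K] [AddCommGroup V] [Module K V]
    [FiniteDimensional K V] (g h : Module.End K V) (l m : K) :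
    LinearMap.rank (g * h - (l * m) • (1 : Module.End K V)) ≤
      LinearMap.rank (g - l • (1 : Module.End K V)) +
        LinearMap.rank (h - m • (1 : Module.End K V)) ∧
    ∀ (k : ℕ) (gs : Fin k → Module.End K V) (ls : Fin k → K),
      (∀ i, LinearMap.rank (gs i - ls i • (1 : Module.End K V)) ≤ 1) →
      (LinearMap.rank ((List.ofFn gs).prod - (∏ i, ls i) • (1 : Module.End K V))
          ≤ (k : Cardinal)) ∧
      (k < Module.finrank K V →
        Module.End.HasEigenvalue (List.ofFn gs).prod (∏ i, ls i)) := by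
  refine ⟨aux_rank_mul_sub g h l m, ?_⟩
  intro k
  have main : ∀ (gs : Fin k → Module.End K V) (ls : Fin k → K),
      (∀ i, LinearMap.rank (gs i - ls i • (1 : Module.End K V)) ≤ 1) →
      LinearMap.rank ((List.ofFn gs).prod - (∏ i, ls i) • (1 : Module.End K V))
          ≤ (k : Cardinal) := by
    induction k with
    | zero =>
      intro gs ls _
      simp [LinearMap.rank]
    | succ n ih =>
      intro gs ls hr
      rw [List.ofFn_succ, List.prod_cons, Fin.prod_univ_succ]
      refine le_trans (aux_rank_mul_sub _ _ _ _) ?_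
      refine le_trans (add_le_add (hr 0) (ih _ _ fun i => hr i.succ)) (le_of_eq ?_)
      push_cast
      ring
  intro gs ls hr
  refine ⟨main gs ls hr, fun hk => ?_⟩
  rw [Module.End.hasEigenvalue_iff, Module.End.eigenspace_def]
  intro hbot
  set f := (List.ofFn gs).prod - (∏ i, ls i) • (1 : Module.End K V)
  have h1 : finrank K (LinearMap.range f) + finrank K (LinearMap.ker f) = finrank K V :=
    LinearMap.finrank_range_add_finrank_ker f
  have h2 : finrank K (LinearMap.ker f) = 0 := by rw [hbot]; simp
  have h3 : (finrank K (LinearMap.range f) : Cardinal) ≤ (k : Cardinal) := by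
    rw [Module.finrank_eq_rank]
    exact main gs ls hr
  have h4 : finrank K (LinearMap.range f) ≤ k := by exact_mod_cast h3
  omega
end

section
/- Let p be an odd prime and f ≥ 1 an integer such that p^f − 1 is a power of 2. Then either f = 1 (so p is a Fermat-type prime, p = 2^k + 1) or p^f = 9. -/
/-- If `p` is an odd prime, `f ≥ 1`, and `p ^ f - 1` is a power of 2,
then `f = 1` or `p ^ f = 9`. -/
theorem stmt_7 (p f k : ℕ) (hp : p.Prime) (hodd : Odd p) (hf : 1 ≤ f)
    (h : p ^ f = 2 ^ k + 1) : f = 1 ∨ p ^ f = 9 := by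
  have hp2 : 2 ≤ p := hp.two_le
  have hpmod : p % 2 = 1 := Nat.odd_iff.mp hodd
  have hp3 : 3 ≤ p := by omega
  rcases Nat.even_or_odd f with hfe | hfo
  · -- f even: conclude p ^ f = 9
    right
    obtain ⟨m, hm⟩ := hfe
    have hm1 : 1 ≤ m := by omega
    have hx : p ^ m * p ^ m = 2 ^ k + 1 := by
      rw [← pow_add, ← hm]; exact h
    have hxodd : (p ^ m) % 2 = 1 := by
      simp [Nat.pow_mod, hpmod]
    have hx3 : 3 ≤ p ^ m := le_trans hp3 (Nat.le_self_pow (by omega) p)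
    obtain ⟨y, hy⟩ : ∃ y, p ^ m = y + 1 := ⟨p ^ m - 1, by omega⟩
    have key : y * (y + 2) = 2 ^ k := by nlinarith [hx, hy]
    have hyd : y ∣ 2 ^ k := ⟨y + 2, key.symm⟩
    have hyd2 : (y + 2) ∣ 2 ^ k := ⟨y, by rw [← key]; ring⟩
    obtain ⟨a, _, hya⟩ := (Nat.dvd_prime_pow Nat.prime_two).mp hyd
    obtain ⟨b, _, hyb⟩ := (Nat.dvd_prime_pow Nat.prime_two).mp hyd2
    have hyev : y % 2 = 0 := by omega
    have ha1 : 1 ≤ a := by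
      rcases Nat.eq_zero_or_pos a with h0 | h1
      · exfalso; rw [h0, pow_zero] at hya; omega
      · exact h1
    have hab : a < b := by
      have : (2:ℕ) ^ a < 2 ^ b := by omega
      exact (Nat.pow_lt_pow_iff_right (by norm_num)).mp this
    have hdvd2 : (2:ℕ) ^ a ∣ 2 := by
      have h1 : (2:ℕ) ^ a ∣ 2 ^ b := pow_dvd_pow 2 (le_of_lt hab)
      have h2 := Nat.dvd_sub h1 (dvd_refl (2 ^ a))
      have hdiff : 2 ^ b - 2 ^ a = 2 := by omega
      rwa [hdiff] at h2
    have ha : a = 1 := by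
      have := Nat.le_of_dvd (by norm_num) hdvd2
      have h2 : 2 ^ a ≤ 2 ^ 1 := by simpa using this
      have := (Nat.pow_le_pow_iff_right (by norm_num : 1 < 2)).mp h2
      omega
    have hy2 : y = 2 := by rw [hya, ha]; norm_num
    have h8 : 2 ^ k = 8 := by rw [← key, hy2]
    rw [h, h8]
  · -- f odd: conclude f = 1
    by_cases hf1 : f = 1
    · exact Or.inl hf1
    exfalso
    have hf3 : 3 ≤ f := by
      rcases hfo with ⟨t, ht⟩; omega
    set Q := ∑ i ∈ Finset.range f, p ^ i with hQ
    have hQdvdZ : (Q : ℤ) ∣ (2:ℤ) ^ k := by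
      have hgeom : (∑ i ∈ Finset.range f, (p:ℤ) ^ i) * ((p:ℤ) - 1) = (p:ℤ) ^ f - 1 :=
        geom_sum_mul _ _
      have hcast : ((p:ℤ)) ^ f = 2 ^ k + 1 := by exact_mod_cast h
      refine ⟨(p:ℤ) - 1, ?_⟩
      push_cast [hQ]
      rw [hgeom, hcast]; ring
    have hQdvd : Q ∣ 2 ^ k := by exact_mod_cast hQdvdZ
    obtain ⟨i, _, hQi⟩ := (Nat.dvd_prime_pow Nat.prime_two).mp hQdvd
    have hQodd : Q % 2 = 1 := by
      rw [hQ, Finset.sum_nat_mod]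
      simp only [Nat.pow_mod, hpmod, one_pow]
      simp [Finset.sum_const, Nat.odd_iff.mp hfo]
    have hi0 : i = 0 := by
      rcases Nat.eq_zero_or_pos i with h0 | h1
      · exact h0
      · exfalso
        have : (2:ℕ) ∣ 2 ^ i := dvd_pow_self 2 (by omega)
        omega
    have hQ1 : Q = 1 := by rw [hQi, hi0, pow_zero]
    have hsub : ({0, 1} : Finset ℕ) ⊆ Finset.range f := by
      intro x hx
      simp only [Finset.mem_insert, Finset.mem_singleton] at hx
      simp only [Finset.mem_range]
      omega
    have hle : (∑ i ∈ ({0, 1} : Finset ℕ), p ^ i) ≤ Q :=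
      Finset.sum_le_sum_of_subset hsub
    simp at hle
    omega
end

section
/- Let q = 2^{2^m} + 1 be a Fermat prime with q > 17 (i.e., m ≥ 3). Then q + 1 has a prime divisor r ≥ 5. -/
/-- If `q = 2 ^ 2 ^ m + 1` is a Fermat prime with `m ≥ 3` (so `q > 17`),
then `q + 1` has a prime divisor `r ≥ 5`. -/
theorem stmt_9 (m : ℕ) (hm : 3 ≤ m) (hq : Nat.Prime (2 ^ 2 ^ m + 1)) :
    ∃ r : ℕ, r.Prime ∧ 5 ≤ r ∧ r ∣ (2 ^ 2 ^ m + 1) + 1 := by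
  by_contra h
  push_neg at h
  -- set up x = 2^m - 1 ≥ 7
  have h8 : 8 ≤ 2 ^ m := by
    calc (8:ℕ) = 2 ^ 3 := by norm_num
    _ ≤ 2 ^ m := Nat.pow_le_pow_right (by norm_num) hm
  set x := 2 ^ m - 1 with hxdef
  have hx : 7 ≤ x := by omega
  have hsplit : (2 ^ 2 ^ m + 1) + 1 = 2 * (2 ^ x + 1) := by
    have : 2 ^ m = x + 1 := by omega
    rw [this, pow_succ]
    ring
  set M := 2 ^ x + 1 with hMdef
  have hMbig : 129 ≤ M := by
    have : (2:ℕ) ^ 7 ≤ 2 ^ x := Nat.pow_le_pow_right (by norm_num) hx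
    simp only [hMdef]; omega
  have hModd : M % 2 = 1 := by
    have : 2 ^ x % 2 = 0 := by
      have : (2:ℕ) ∣ 2 ^ x := dvd_pow_self 2 (by omega)
      omega
    omega
  -- every prime dividing M is 3
  have h3 : ∀ {p : ℕ}, p.Prime → p ∣ M → p = 3 := by
    intro p hp hpd
    have hdq : p ∣ (2 ^ 2 ^ m + 1) + 1 := by
      rw [hsplit]; exact hpd.mul_left 2
    have hp5 : p < 5 := by
      by_contra hc
      exact h p hp (by omega) hdq
    have hp2 : p ≠ 2 := by
      rintro rfl
      obtain ⟨k, hk⟩ := hpd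
      omega
    have := hp.two_le
    interval_cases p
    · exact absurd rfl hp2
    · rfl
    · exact absurd hp (by norm_num)
  -- hence M is a power of 3
  obtain ⟨b, hb⟩ : ∃ b, M = 3 ^ b :=
    ⟨_, Nat.eq_prime_pow_of_unique_prime_dvd (by omega) h3⟩
  -- b is even: M ≡ 1 mod 8
  have hM8 : M % 8 = 1 := by
    have : (8:ℕ) ∣ 2 ^ x := by
      have : 2 ^ x = 8 * 2 ^ (x - 3) := by
        rw [show (8:ℕ) = 2 ^ 3 by norm_num, ← pow_add]
        congr 1; omega
      exact ⟨_, this⟩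
    obtain ⟨k, hk⟩ := this
    simp only [hMdef]; omega
  obtain ⟨c, hc⟩ : ∃ c, b = 2 * c := by
    rcases Nat.even_or_odd b with ⟨c, hc⟩ | ⟨c, hc⟩
    · exact ⟨c, by omega⟩
    · exfalso
      have h9 : 9 ^ c % 8 = 1 := by
        rw [Nat.pow_mod]; norm_num
      have : 3 ^ b = 3 * 9 ^ c := by
        rw [hc, pow_add, pow_mul]; norm_num [mul_comm]
      rw [hb, this] at hM8
      rw [Nat.mul_mod, h9] at hM8
      omega
  -- M = (3^c)^2
  have hsq : (3 ^ c) ^ 2 = 2 ^ x + 1 := by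
    rw [← pow_mul, mul_comm, ← hc, ← hb]
  have hc1 : 1 ≤ c := by
    rcases Nat.eq_zero_or_pos c with rfl | hcp
    · simp at hsq
    · exact hcp
  -- write 3^c = z + 1, then z * (z+2) = 2^x
  obtain ⟨z, hz⟩ : ∃ z, 3 ^ c = z + 1 := ⟨3 ^ c - 1, by have : 1 ≤ 3 ^ c := Nat.one_le_pow _ _ (by norm_num); omega⟩
  have hz2 : 2 ≤ z := by
    have : (3:ℕ) ^ 1 ≤ 3 ^ c := Nat.pow_le_pow_right (by norm_num) hc1
    omega
  have hprod : z * (z + 2) = 2 ^ x := by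
    rw [hz] at hsq; nlinarith [hsq]
  -- z and z+2 are powers of 2
  have hzd : z ∣ 2 ^ x := ⟨z + 2, hprod.symm⟩
  have hz2d : (z + 2) ∣ 2 ^ x := ⟨z, by rw [← hprod]; ring⟩
  obtain ⟨i, hi, hiz⟩ := (Nat.dvd_prime_pow Nat.prime_two).mp hzd
  obtain ⟨j, hj, hjz⟩ := (Nat.dvd_prime_pow Nat.prime_two).mp hz2d
  -- 2^i + 2 = 2^j with 2^i ≥ 2
  have hi1 : 1 ≤ i := by
    rcases Nat.eq_zero_or_pos i with rfl | h; · simp at hiz; omega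
    · exact h
  have hi2 : i < 2 := by
    by_contra hcon
    have h4i : (4:ℕ) ∣ 2 ^ i := by
      rw [show (4:ℕ) = 2^2 by norm_num]
      exact pow_dvd_pow 2 (by omega)
    have hj3 : 3 ≤ j := by
      by_contra hj3
      interval_cases j <;> simp_all <;> omega
    have h4j : (8:ℕ) ∣ 2 ^ j := by
      rw [show (8:ℕ) = 2^3 by norm_num]
      exact pow_dvd_pow 2 hj3
    obtain ⟨k1, hk1⟩ := h4i
    obtain ⟨k2, hk2⟩ := h4j
    omega
  -- so i = 1, z = 2, 3^c = 3, c = 1, M = 9 < 129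
  have : i = 1 := by omega
  subst this
  have hz2' : z = 2 := by simpa using hiz
  have hc3 : 3 ^ c = 3 ^ 1 := by rw [hz, hz2']; norm_num
  have : c = 1 := Nat.pow_right_injective (by norm_num) hc3
  subst this
  have : M = 9 := by rw [hb, hc]; norm_num
  omega
end

section
/- Let G be a group with center Z, let a, b, c ∈ G, and let S ⊆ G be a subset such that S ∖ Z ⊆ a^G · b^G and S ∖ Z ⊆ b^G · c^G, there exists y ∈ S ∖ Z with a^G · y^G ⊇ G ∖ Z, and z·c^{-1} ∈ S ∖ Z for all z ∈ Z. Then a^G · b^G · c^G = G. -/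
open Pointwise

/-- Abstract form of Lemma 2.1: if `S ∖ Z ⊆ a^G·b^G`, `S ∖ Z ⊆ b^G·c^G`,
there is `y ∈ S ∖ Z` with `a^G·y^G ⊇ G ∖ Z`, and `z·c⁻¹ ∈ S ∖ Z` for every
central `z`, then `a^G·b^G·c^G = G`. -/
theorem stmt_18 {G : Type*} [Group G] (a b c : G) (S : Set G)
    (h1 : S \ (Subgroup.center G : Set G)
        ⊆ {h | IsConj a h} * {h | IsConj b h})
    (h2 : S \ (Subgroup.center G : Set G)
        ⊆ {h | IsConj b h} * {h | IsConj c h})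
    (h3 : ∃ y ∈ S \ (Subgroup.center G : Set G),
        Set.univ \ (Subgroup.center G : Set G)
          ⊆ {h | IsConj a h} * {h | IsConj y h})
    (h4 : ∀ z ∈ Subgroup.center G, z * c⁻¹ ∈ S \ (Subgroup.center G : Set G)) :
    {h | IsConj a h} * {h | IsConj b h} * {h | IsConj c h} = Set.univ := by
  apply Set.eq_univ_of_forall
  intro g
  by_cases hg : g ∈ Subgroup.center G
  · -- g central : g = (g c⁻¹) * c, and g c⁻¹ ∈ a^G · b^G
    have := h1 (h4 g hg)
    obtain ⟨u, hu, v, hv, huv⟩ := this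
    exact ⟨g * c⁻¹, ⟨u, hu, v, hv, huv⟩, c, IsConj.refl c, by group⟩
  · obtain ⟨y, hy, hcov⟩ := h3
    have hgm : g ∈ {h | IsConj a h} * {h | IsConj y h} :=
      hcov ⟨Set.mem_univ g, hg⟩
    obtain ⟨u, hu, w, hw, huw⟩ := hgm
    -- w is conjugate to y, and y ∈ b^G · c^G
    obtain ⟨p, hp, q, hq, hpq⟩ := h2 hy
    obtain ⟨t, ht⟩ := isConj_iff.mp hw
    refine ⟨u * (t * p * t⁻¹), ⟨u, hu, t * p * t⁻¹, ?_, rfl⟩, t * q * t⁻¹, ?_, ?_⟩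
    · exact hp.trans (isConj_iff.mpr ⟨t, rfl⟩)
    · exact hq.trans (isConj_iff.mpr ⟨t, rfl⟩)
    · simp only at huw hpq ⊢
      rw [← huw, ← ht, ← hpq]; group
end
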